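/- arXiv:2407.12928 — 2 statements merged into one kernel-verified Lean document; each statement's English description precedes it below -/
import Mathlib

section
/- Let w ≥ 1 and N ≥ 1 be natural numbers and let f : {0, …, N−1} → ℕ be a function with f(i) < 2^w for every i. Let d be the number of indices i ∈ {0, …, N−1} with f(i) = 0. Then HW( Σ_{i=0}^{N−1} 2^(2·w·i) · (2^w − 1) · (2^w − f(i) + 1) ) = 2·w·d + w·(N − d). -/
/-- The Hamming weight of a natural number: the sum of its base-2 digits. -/
def HW (n : ℕ) : ℕ := (Nat.digits 2 n).sum

lemma HW_rec (n : ℕ) : HW n = n % 2 + HW (n / 2) := by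
  rcases Nat.eq_zero_or_pos n with h | h
  · simp [h, HW]
  · rw [HW, Nat.digits_def' (by norm_num) h]
    simp [HW]

lemma HW_add_pow_mul (k : ℕ) : ∀ a b : ℕ, a < 2 ^ k → HW (a + 2 ^ k * b) = HW a + HW b := by
  induction k with
  | zero =>
    intro a b ha
    interval_cases a
    simp [HW]
  | succ k ih =>
    intro a b ha
    have hp : (2:ℕ) ^ (k + 1) * b = 2 * (2 ^ k * b) := by ring
    rw [hp]
    have h1 : (a + 2 * (2 ^ k * b)) % 2 = a % 2 := by omega
    have h2 : (a + 2 * (2 ^ k * b)) / 2 = a / 2 + 2 ^ k * b := by omega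
    rw [HW_rec (a + 2 * (2 ^ k * b)), HW_rec a, h1, h2, ih (a / 2) b (by omega)]
    ring

lemma HW_compl (k : ℕ) : ∀ m : ℕ, m < 2 ^ k → HW (2 ^ k - 1 - m) + HW m = k := by
  induction k with
  | zero =>
    intro m hm
    interval_cases m
    simp [HW]
  | succ k ih =>
    intro m hm
    have hp : (2:ℕ) ^ (k + 1) = 2 * 2 ^ k := by ring
    have hk : 1 ≤ (2:ℕ) ^ k := Nat.one_le_two_pow
    have h1 : (2 ^ (k+1) - 1 - m) % 2 = 1 - m % 2 := by omega
    have h2 : (2 ^ (k+1) - 1 - m) / 2 = 2 ^ k - 1 - m / 2 := by omega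
    rw [HW_rec (2 ^ (k+1) - 1 - m), HW_rec m, h1, h2]
    have := ih (m / 2) (by omega)
    omega

lemma HW_two_pow_sub_one (k : ℕ) : HW (2 ^ k - 1) = k := by
  have := HW_compl k 0 Nat.one_le_two_pow
  simpa [HW] using this

lemma HW_block (w f : ℕ) (hf : f < 2 ^ w) :
    HW ((2 ^ w - 1) * (2 ^ w - f + 1)) = if f = 0 then 2 * w else w := by
  have hk : 1 ≤ (2:ℕ) ^ w := Nat.one_le_two_pow
  rcases eq_or_ne f 0 with h | h
  · subst h
    simp only [if_pos rfl, Nat.sub_zero]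
    have key : (2 ^ w - 1) * (2 ^ w + 1) = 2 ^ (2 * w) - 1 := by
      obtain ⟨b, hb⟩ : ∃ b, (2:ℕ) ^ w = 1 + b := ⟨2 ^ w - 1, by omega⟩
      have h2w : (2:ℕ) ^ (2 * w) = 2 ^ w * 2 ^ w := by rw [two_mul, pow_add]
      rw [h2w, hb]
      have e1 : (1 + b - 1) * (1 + b + 1) = b * b + 2 * b := by
        rw [Nat.add_sub_cancel_left]; ring
      have e2 : (1 + b) * (1 + b) = b * b + 2 * b + 1 := by ring
      omega
    rw [key, HW_two_pow_sub_one]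
    simp
  · -- f ≥ 1
    obtain ⟨g, rfl⟩ : ∃ g, f = g + 1 := ⟨f - 1, by omega⟩
    obtain ⟨c, hc⟩ : ∃ c, (2:ℕ) ^ w = g + c + 2 := ⟨2 ^ w - g - 2, by omega⟩
    have key : (2 ^ w - 1) * (2 ^ w - (g + 1) + 1) = g + 2 ^ w * (2 ^ w - 1 - g) := by
      have h1 : (2:ℕ) ^ w - 1 = g + c + 1 := by omega
      have h2 : (2:ℕ) ^ w - (g + 1) + 1 = c + 2 := by omega
      have h3 : (2:ℕ) ^ w - 1 - g = c + 1 := by omega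
      rw [h3, h2, h1, hc]; ring
    rw [key, HW_add_pow_mul w g (2 ^ w - 1 - g) (by omega), if_neg (by omega)]
    have := HW_compl w g (by omega)
    omega

lemma block_le (w f : ℕ) : (2 ^ w - 1) * (2 ^ w - f + 1) ≤ 2 ^ (2 * w) - 1 := by
  have hk : 1 ≤ (2:ℕ) ^ w := Nat.one_le_two_pow
  have h1 : (2 ^ w - 1) * (2 ^ w - f + 1) ≤ (2 ^ w - 1) * (2 ^ w + 1) :=
    Nat.mul_le_mul_left _ (by omega)
  have key : ((2:ℕ) ^ w - 1) * (2 ^ w + 1) = 2 ^ (2 * w) - 1 := by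
    obtain ⟨b, hb⟩ : ∃ b, (2:ℕ) ^ w = 1 + b := ⟨2 ^ w - 1, by omega⟩
    have h2w : (2:ℕ) ^ (2 * w) = 2 ^ w * 2 ^ w := by rw [two_mul, pow_add]
    rw [h2w, hb]
    have e1 : (1 + b - 1) * (1 + b + 1) = b * b + 2 * b := by
      rw [Nat.add_sub_cancel_left]; ring
    have e2 : (1 + b) * (1 + b) = b * b + 2 * b + 1 := by ring
    omega
  omega

lemma sum_blocks_lt (w : ℕ) (f : ℕ → ℕ) (N : ℕ) :
    ∑ i ∈ Finset.range N, 2 ^ (2 * w * i) * ((2 ^ w - 1) * (2 ^ w - f i + 1))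
      < 2 ^ (2 * w * N) := by
  induction N with
  | zero => simp [Nat.one_le_two_pow]
  | succ N ih =>
    rw [Finset.sum_range_succ]
    have h1 : 2 ^ (2 * w * N) * ((2 ^ w - 1) * (2 ^ w - f N + 1))
        ≤ 2 ^ (2 * w * N) * (2 ^ (2 * w) - 1) :=
      Nat.mul_le_mul_left _ (block_le w (f N))
    have h2 : (2:ℕ) ^ (2 * w * (N + 1)) = 2 ^ (2 * w * N) * 2 ^ (2 * w) := by
      rw [← pow_add]; ring_nf
    have hk : 1 ≤ (2:ℕ) ^ (2 * w) := Nat.one_le_two_pow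
    have h3 : 2 ^ (2 * w * N) * (2 ^ (2 * w) - 1) + 2 ^ (2 * w * N)
        = 2 ^ (2 * w * N) * 2 ^ (2 * w) := by
      rw [← Nat.mul_succ, Nat.succ_eq_add_one, Nat.sub_add_cancel hk]
    omega

lemma main_aux (w : ℕ) (f : ℕ → ℕ) : ∀ N, (∀ i < N, f i < 2 ^ w) →
    HW (∑ i ∈ Finset.range N, 2 ^ (2 * w * i) * ((2 ^ w - 1) * (2 ^ w - f i + 1))) =
      2 * w * (Finset.filter (fun i => f i = 0) (Finset.range N)).card +
        w * (N - (Finset.filter (fun i => f i = 0) (Finset.range N)).card) := by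
  intro N
  induction N with
  | zero => simp [HW]
  | succ N ih =>
    intro hf
    have hf' : ∀ i < N, f i < 2 ^ w := fun i hi => hf i (by omega)
    rw [Finset.sum_range_succ, HW_add_pow_mul _ _ _ (sum_blocks_lt w f N), ih hf']
    have hd : (Finset.filter (fun i => f i = 0) (Finset.range N)).card ≤ N := by
      calc (Finset.filter (fun i => f i = 0) (Finset.range N)).card
          ≤ (Finset.range N).card := Finset.card_filter_le _ _
        _ = N := Finset.card_range N
    have hblock := HW_block w (f N) (hf N (by omega))
    have hfilter : (Finset.filter (fun i => f i = 0) (Finset.range (N + 1))).card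
        = (Finset.filter (fun i => f i = 0) (Finset.range N)).card
          + (if f N = 0 then 1 else 0) := by
      rw [Finset.range_add_one, Finset.filter_insert]
      split
      · rw [Finset.card_insert_of_notMem (by simp)]
      · rfl
    set D := (Finset.filter (fun i => f i = 0) (Finset.range N)).card with hD
    rcases eq_or_ne (f N) 0 with h | h
    · rw [if_pos h] at hblock hfilter
      rw [hblock, hfilter, show N + 1 - (D + 1) = N - D from by omega]
      ring
    · rw [if_neg h] at hblock hfilter
      rw [hblock, hfilter, Nat.add_zero, show N + 1 - D = (N - D) + 1 from by omega]
      ring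

/-- The core counting identity: the Hamming weight of the concatenated sum counts
zeros of `f` with weight `2w` and nonzeros with weight `w`. -/
theorem stmt_6 (w N : ℕ) (hw : 1 ≤ w) (hN : 1 ≤ N) (f : ℕ → ℕ)
    (hf : ∀ i < N, f i < 2 ^ w)
    (d : ℕ) (hd : d = (Finset.filter (fun i => f i = 0) (Finset.range N)).card) :
    HW (∑ i ∈ Finset.range N, 2 ^ (2 * w * i) * (2 ^ w - 1) * (2 ^ w - f i + 1)) =
      2 * w * d + w * (N - d) := by
  have := main_aux w f N hf
  simp only [← mul_assoc] at this
  rw [this, hd]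
end

section
/- Let m ≥ 2 and n ≥ 1 be integers and let T = 2^(n·m² + n·m + 1). Then ⌊n^(1/m)⌋ + 1 equals the cardinality of the set of tuples (a, b, c, d, e, f, g) ∈ {0, …, T−1}⁷ satisfying the five conditions a = (m+1)·g + 1, b = m·a, 2^b + c·g = c·2^a + d, d + e + g + 1 = 2^a, and d + f = n. -/
/-!
Put `a = (m + 1) g + 1`, `X = 2 ^ a` and `Y = X - g`. Since `g ^ m + g < X`, we have `g ^ m < Y`,
and the third and fourth conditions say exactly that `X ^ m = 2 ^ b = c Y + d` with `d < Y`,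
i.e. `c` and `d` are the quotient and remainder of `X ^ m` by `Y`. As `X ≡ g [MOD Y]`, that
remainder is `g ^ m`, so the last condition becomes `g ^ m ≤ n`, i.e. `g ≤ r`. Hence the
solutions are parametrised by `g ∈ {0, …, r}`, and `T` is chosen large enough to contain them all.
-/

open Finset

theorem pow_add_self_lt_two_pow (m g : ℕ) : g ^ m + g < 2 ^ ((m + 1) * g + 1) := by
  have hgm : g ^ m ≤ 2 ^ ((m + 1) * g) :=
    calc g ^ m ≤ (2 ^ g) ^ m := Nat.pow_le_pow_left Nat.lt_two_pow_self.le m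
      _ = 2 ^ (m * g) := by rw [← pow_mul, mul_comm]
      _ ≤ 2 ^ ((m + 1) * g) := Nat.pow_le_pow_right two_pos (by nlinarith)
  have hg : g < 2 ^ ((m + 1) * g) :=
    Nat.lt_two_pow_self.trans_le (Nat.pow_le_pow_right two_pos (by nlinarith))
  rw [pow_succ]
  omega

theorem add_pow_mod_eq_pow {Y g : ℕ} (m : ℕ) (h : g ^ m < Y) : (Y + g) ^ m % Y = g ^ m := by
  have hmod : Y + g ≡ g [MOD Y] := by simp [Nat.ModEq]
  rw [hmod.pow m, Nat.mod_eq_of_lt h]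

theorem pow_le_iff_le_of_pow_le_lt_succ_pow {m n r g : ℕ} (hm : m ≠ 0) (hr1 : r ^ m ≤ n)
    (hr2 : n < (r + 1) ^ m) : g ^ m ≤ n ↔ g ≤ r :=
  ⟨fun hg => Nat.lt_succ_iff.1 ((Nat.pow_lt_pow_iff_left hm).1 (hg.trans_lt hr2)),
    fun hg => (Nat.pow_le_pow_left hg m).trans hr1⟩

def rootTuple (m n g : ℕ) : ℕ × ℕ × ℕ × ℕ × ℕ × ℕ × ℕ :=
  ((m + 1) * g + 1, m * ((m + 1) * g + 1),
    2 ^ (m * ((m + 1) * g + 1)) / (2 ^ ((m + 1) * g + 1) - g), g ^ m,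
    2 ^ ((m + 1) * g + 1) - g - 1 - g ^ m, n - g ^ m, g)

theorem rootTuple_injective (m n : ℕ) : Function.Injective (rootTuple m n) :=
  fun _ _ h => congrArg (fun t => t.2.2.2.2.2.2) h

theorem conditions_iff_eq_rootTuple (m n : ℕ) (t : ℕ × ℕ × ℕ × ℕ × ℕ × ℕ × ℕ) :
    (t.1 = (m + 1) * t.2.2.2.2.2.2 + 1 ∧
      t.2.1 = m * t.1 ∧
      2 ^ t.2.1 + t.2.2.1 * t.2.2.2.2.2.2 = t.2.2.1 * 2 ^ t.1 + t.2.2.2.1 ∧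
      t.2.2.2.1 + t.2.2.2.2.1 + t.2.2.2.2.2.2 + 1 = 2 ^ t.1 ∧
      t.2.2.2.1 + t.2.2.2.2.2.1 = n) ↔
    t.2.2.2.2.2.2 ^ m ≤ n ∧ rootTuple m n t.2.2.2.2.2.2 = t := by
  obtain ⟨a, b, c, d, e, f, g⟩ := t
  simp only [rootTuple, Prod.mk.injEq, and_true]
  have hlt := pow_add_self_lt_two_pow m g
  obtain ⟨Y, hYg⟩ : ∃ Y, 2 ^ ((m + 1) * g + 1) = Y + g :=
    ⟨_, (Nat.sub_add_cancel (by omega)).symm⟩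
  have hgY : g ^ m < Y := by omega
  have hpow : 2 ^ (m * ((m + 1) * g + 1)) = (Y + g) ^ m := by rw [mul_comm, pow_mul, hYg]
  rw [hpow, hYg, Nat.add_sub_cancel]
  constructor
  · rintro ⟨rfl, rfl, hc, he, hf⟩
    rw [hpow, hYg] at hc
    rw [hYg] at he
    have hdiv : d + Y * c = (Y + g) ^ m ∧ d < Y := ⟨by linarith, by omega⟩
    obtain ⟨rfl, rfl⟩ := (Nat.div_mod_unique (by omega)).2 hdiv
    rw [add_pow_mod_eq_pow m hgY] at hf he ⊢
    exact ⟨by omega, rfl, rfl, rfl, rfl, by omega, by omega⟩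
  · rintro ⟨hgn, rfl, rfl, rfl, rfl, rfl, rfl⟩
    have hdiv := Nat.mod_add_div ((Y + g) ^ m) Y
    rw [add_pow_mod_eq_pow m hgY] at hdiv
    refine ⟨rfl, rfl, ?_, by omega, by omega⟩
    rw [hpow, hYg]
    nlinarith

theorem rootTuple_mem_range {m n g T : ℕ} (hm : m ≠ 0) (hn : 1 ≤ n) (hg : g ^ m ≤ n)
    (hT : 2 ^ (n * m ^ 2 + n * m + 1) ≤ T) :
    rootTuple m n g ∈
      range T ×ˢ range T ×ˢ range T ×ˢ range T ×ˢ range T ×ˢ range T ×ˢ range T := by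
  simp only [rootTuple, mem_product, mem_range]
  obtain ⟨k, rfl⟩ := Nat.exists_eq_add_of_le (Nat.one_le_iff_ne_zero.2 hm)
  generalize hs : (1 + k + 1) * g = s
  have hgn : g ≤ n := (Nat.le_self_pow hm g).trans hg
  have hgs : g ≤ s := by nlinarith
  have hsn : k * s ≤ k * ((k + 2) * n) := Nat.mul_le_mul_left k (by nlinarith)
  generalize hE : n * (1 + k) ^ 2 + n * (1 + k) = E at hT
  have hsE : s ≤ E := by nlinarith
  have hnE : n + k ≤ E := by nlinarith
  have hET : 2 * E < T := by
    have := Nat.lt_two_pow_self (n := E)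
    rw [pow_succ] at hT
    omega
  have hXT : 2 ^ (s + 1) ≤ T := (Nat.pow_le_pow_right two_pos (by omega)).trans hT
  have hb : (1 + k) * (s + 1) < T := by nlinarith
  have hc : 2 ^ ((1 + k) * (s + 1)) / (2 ^ (s + 1) - g) < T := by
    have hY : 2 ^ s ≤ 2 ^ (s + 1) - g := by
      have := Nat.lt_two_pow_self.trans_le (Nat.pow_le_pow_right two_pos hgs)
      rw [pow_succ]; omega
    rw [Nat.div_lt_iff_lt_mul (hY.trans_lt' (by positivity))]
    calc 2 ^ ((1 + k) * (s + 1)) < 2 ^ (E + 1 + s) :=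
          Nat.pow_lt_pow_right one_lt_two (by nlinarith)
      _ = 2 ^ (E + 1) * 2 ^ s := pow_add _ _ _
      _ ≤ T * (2 ^ (s + 1) - g) := Nat.mul_le_mul hT hY
  exact ⟨by omega, hb, hc, by omega, by omega, by omega, by omega⟩

theorem stmt_14_general (m n r : ℕ) (hn : 1 ≤ n)
    (hr1 : r ^ m ≤ n) (hr2 : n < (r + 1) ^ m)
    (T : ℕ) (hT : T = 2 ^ (n * m ^ 2 + n * m + 1)) :
    r + 1 =
      (Finset.filter
        (fun t : ℕ × ℕ × ℕ × ℕ × ℕ × ℕ × ℕ =>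
          t.1 = (m + 1) * t.2.2.2.2.2.2 + 1 ∧
          t.2.1 = m * t.1 ∧
          2 ^ t.2.1 + t.2.2.1 * t.2.2.2.2.2.2 = t.2.2.1 * 2 ^ t.1 + t.2.2.2.1 ∧
          t.2.2.2.1 + t.2.2.2.2.1 + t.2.2.2.2.2.2 + 1 = 2 ^ t.1 ∧
          t.2.2.2.1 + t.2.2.2.2.2.1 = n)
        (Finset.range T ×ˢ Finset.range T ×ˢ Finset.range T ×ˢ Finset.range T ×ˢ
          Finset.range T ×ˢ Finset.range T ×ˢ Finset.range T)).card := by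
  classical
  have hm : m ≠ 0 := by
    rintro rfl
    rw [pow_zero] at hr2
    omega
  rw [← card_range (r + 1), ← card_image_of_injective _ (rootTuple_injective m n)]
  congr 1
  ext t
  simp only [mem_image, mem_range, mem_filter, conditions_iff_eq_rootTuple, Nat.lt_succ_iff,
    ← pow_le_iff_le_of_pow_le_lt_succ_pow hm hr1 hr2]
  constructor
  · rintro ⟨g, hg, rfl⟩
    exact ⟨rootTuple_mem_range hm hn hg hT.ge, hg, rfl⟩
  · rintro ⟨-, hg, ht⟩
    exact ⟨_, hg, ht⟩

/-- For `m ≥ 2`, `n ≥ 1` and `T = 2^(nm² + nm + 1)`, the number `⌊n^(1/m)⌋ + 1`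
(with `r` the largest natural satisfying `r^m ≤ n`) equals the number of 7-tuples
`(a,b,c,d,e,f,g) ∈ {0,…,T−1}⁷` with `a = (m+1)g + 1`, `b = ma`,
`2^b + cg = c·2^a + d`, `d + e + g + 1 = 2^a` and `d + f = n`. -/
theorem stmt_14 (m n r : ℕ) (hm : 2 ≤ m) (hn : 1 ≤ n)
    (hr1 : r ^ m ≤ n) (hr2 : n < (r + 1) ^ m)
    (T : ℕ) (hT : T = 2 ^ (n * m ^ 2 + n * m + 1)) :
    r + 1 =
      (Finset.filter
        (fun t : ℕ × ℕ × ℕ × ℕ × ℕ × ℕ × ℕ =>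
          t.1 = (m + 1) * t.2.2.2.2.2.2 + 1 ∧
          t.2.1 = m * t.1 ∧
          2 ^ t.2.1 + t.2.2.1 * t.2.2.2.2.2.2 = t.2.2.1 * 2 ^ t.1 + t.2.2.2.1 ∧
          t.2.2.2.1 + t.2.2.2.2.1 + t.2.2.2.2.2.2 + 1 = 2 ^ t.1 ∧
          t.2.2.2.1 + t.2.2.2.2.2.1 = n)
        (Finset.range T ×ˢ Finset.range T ×ˢ Finset.range T ×ˢ Finset.range T ×ˢ
          Finset.range T ×ˢ Finset.range T ×ˢ Finset.range T)).card :=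
  stmt_14_general m n r hn hr1 hr2 T hT
end
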